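/- arXiv:2107.03574 — 8 statements merged into one kernel-verified Lean document; each statement's English description precedes it below -/
import Mathlib

section
/- Let p be an odd prime. Then (∑_{i=1}^{p-1} (i/p)·4^i)^2 ≡ -(-1/p)·(4^p-1)/3 + (-1/p)·p (mod 4^p - 1), where (i/p) denotes the Legendre symbol. -/
/-!
Over a finite field `F`, the classical computation of `g(χ, ψ) g(χ⁻¹, ψ⁻¹)` only needs
`∑ χ = 0`; without primitivity of `ψ` (and in any commutative coefficient ring) it gives
`#F - ∑ ψ`, hence `g(χ, ψ)² = χ(-1) (#F - ∑ ψ)` for quadratic `χ`.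
In `ZMod (4 ^ p - 1)` we have `4 ^ p = 1`, so `a ↦ 4 ^ a` is an additive character of `ZMod p` with
`∑ ψ = 1 + 4 + ⋯ + 4 ^ (p - 1) = (4 ^ p - 1) / 3`; take `χ` to be the Legendre symbol.
-/

open Finset AddChar MulChar

section GaussSum

variable {F : Type*} [Field F] [Fintype F] {R : Type*} [CommRing R]

lemma AddChar.sum_apply_mul_eq_ite [DecidableEq F] (ψ : AddChar F R) (b : F) :
    ∑ x, ψ (x * b) = if b = 0 then (Fintype.card F : R) else ∑ x, ψ x := by
  split_ifs with hb
  · simp [hb]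
  · exact Fintype.sum_bijective _ (mulRight_bijective₀ b hb) _ _ fun _ ↦ rfl

lemma sum_mulChar_mul_inv_mul_addChar_sub {χ : MulChar F R} (hχ : ∑ a, χ a = 0)
    (ψ : AddChar F R) (b : F) :
    ∑ a, χ (a * b⁻¹) * ψ (a - b) = ∑ c, χ c * ψ (b * (c - 1)) := by
  rcases eq_or_ne b 0 with rfl | hb
  · simp [hχ]
  · refine (Fintype.sum_bijective _ (mulLeft_bijective₀ b hb) _ _ fun x ↦ ?_).symm
    rw [mul_assoc, mul_comm x, ← mul_assoc, mul_inv_cancel₀ hb, one_mul, mul_sub, mul_one]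

theorem gaussSum_mul_gaussSum_inv_eq_card_sub_sum {χ : MulChar F R} (hχ : ∑ a, χ a = 0)
    (ψ : AddChar F R) :
    gaussSum χ ψ * gaussSum χ⁻¹ ψ⁻¹ = Fintype.card F - ∑ a, ψ a := by
  classical
  simp only [gaussSum, AddChar.inv_apply, sum_mul, mul_sum, MulChar.inv_apply']
  conv =>
    enter [1, 2, x, 2, y]
    rw [mul_mul_mul_comm, ← map_mul, ← map_add_eq_mul, ← sub_eq_add_neg]
  simp_rw [sum_mulChar_mul_inv_mul_addChar_sub hχ ψ]
  rw [sum_comm]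
  have hχ' : ∑ x ∈ univ.erase 1, χ x = -1 := by
    rw [← add_sum_erase _ _ (mem_univ 1), map_one] at hχ
    linear_combination hχ
  simp_rw [← mul_sum, ψ.sum_apply_mul_eq_ite, sub_eq_zero]
  rw [← add_sum_erase _ _ (mem_univ 1), if_pos rfl, map_one, one_mul,
    sum_congr rfl fun x hx ↦ by rw [if_neg (ne_of_mem_erase hx)], ← sum_mul, hχ']
  ring

theorem gaussSum_sq_eq_card_sub_sum {χ : MulChar F R} (hχ₂ : χ.IsQuadratic)
    (hχ : ∑ a, χ a = 0) (ψ : AddChar F R) :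
    gaussSum χ ψ ^ 2 = χ (-1) * (Fintype.card F - ∑ a, ψ a) := by
  rw [← gaussSum_mul_gaussSum_inv_eq_card_sub_sum hχ, hχ₂.inv, mul_left_comm,
    mul_gaussSum_inv_eq_gaussSum, sq]

end GaussSum

lemma sum_zmod_val_eq_sum_range {M : Type*} [AddCommMonoid M] (n : ℕ) [NeZero n] (f : ℕ → M) :
    ∑ a : ZMod n, f a.val = ∑ i ∈ range n, f i := by
  obtain ⟨m, rfl⟩ := Nat.exists_eq_succ_of_ne_zero (NeZero.ne n)
  exact Fin.sum_univ_eq_sum_range f _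

theorem sq_sum_legendreSym_mul_pow {R : Type*} [CommRing R] (p : ℕ) [Fact p.Prime] (hp2 : p ≠ 2)
    {ζ : R} (hζ : ζ ^ p = 1) :
    (∑ i ∈ Icc 1 (p - 1), (legendreSym p i : R) * ζ ^ i) ^ 2 =
      legendreSym p (-1) * (p - ∑ i ∈ range p, ζ ^ i) := by
  set χ := (quadraticChar (ZMod p)).ringHomComp (Int.castRingHom R)
  set ψ := zmodChar p hζ
  have hχ : ∑ a, χ a = 0 := by
    have hchar : ringChar (ZMod p) ≠ 2 := by rwa [ZMod.ringChar_zmod_n]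
    simp only [χ, ringHomComp_apply, ← map_sum, quadraticChar_sum_zero hchar, map_zero]
  have hG : gaussSum χ ψ = ∑ i ∈ Icc 1 (p - 1), (legendreSym p i : R) * ζ ^ i := by
    have hzero : ∀ i ∈ range p, i ∉ Icc 1 (p - 1) → (legendreSym p i : R) * ζ ^ i = 0 := by
      intro i hi hi'
      obtain rfl : i = 0 := by simp at hi hi'; omega
      simp
    rw [sum_subset (fun i hi ↦ by simp at hi ⊢; omega) hzero, ← sum_zmod_val_eq_sum_range]
    simp [gaussSum, χ, ψ, legendreSym, zmodChar_apply]
  rw [← hG, gaussSum_sq_eq_card_sub_sum ((quadraticChar_isQuadratic _).comp _) hχ,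
    ZMod.card, ← sum_zmod_val_eq_sum_range]
  simp [ψ, legendreSym, zmodChar_apply]

theorem stmt0 (p : ℕ) [Fact p.Prime] (hp2 : p ≠ 2) :
    (∑ i ∈ Finset.Icc 1 (p - 1), legendreSym p (i : ℤ) * 4 ^ i) ^ 2 ≡
      -(legendreSym p (-1)) * (((4:ℤ) ^ p - 1) / 3) + legendreSym p (-1) * (p : ℤ)
      [ZMOD (4:ℤ) ^ p - 1] := by
  have h4 : (4 : ZMod (4 ^ p - 1)) ^ p = 1 := by
    have h := ZMod.natCast_self (4 ^ p - 1)
    rwa [Nat.cast_sub (Nat.one_le_pow _ _ (by norm_num)), sub_eq_zero, Nat.cast_pow,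
      Nat.cast_ofNat, Nat.cast_one] at h
  have hgeom : ((4:ℤ) ^ p - 1) / 3 = ∑ i ∈ range p, (4:ℤ) ^ i := by
    rw [← mul_geom_sum]; norm_num
  have hN : ((4 ^ p - 1 : ℕ) : ℤ) = 4 ^ p - 1 := by
    push_cast [Nat.one_le_pow _ _ (by norm_num : 0 < 4)]; rfl
  rw [hgeom, ← hN, ← ZMod.intCast_eq_intCast_iff]
  push_cast
  rw [sq_sum_legendreSym_mul_pow p hp2 h4]
  ring
end

section
/- For an odd prime p, ∑_{t=1}^{p-1} (2t/p)·4^{2t} + ∑_{t=0, t≠(p-1)/2}^{p-1} ((2t+1)/p)·4^{2t+1} ≡ 0 (mod 4^p + 1). -/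
/-!
With `f m = (m/p) 4^m`, the two sums are the even and odd parts of `∑_{m<2p} f m`: the terms they
omit (`m = 0` and `m = p`) vanish because `p ∣ m`. Since `(·/p)` has period `p`, the upper half of
that sum is `4^p` times the lower half, so the whole sum is `(4^p + 1) ∑_{m<p} f m`.
-/

open Finset

theorem Finset.sum_range_two_mul {M : Type*} [AddCommMonoid M] (g : ℕ → M) (n : ℕ) :
    ∑ m ∈ range (2 * n), g m = ∑ t ∈ range n, g (2 * t) + ∑ t ∈ range n, g (2 * t + 1) := by
  induction n with
  | zero => simp
  | succ n ih =>
    rw [Nat.mul_succ, sum_range_succ, sum_range_succ, ih, sum_range_succ, sum_range_succ]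
    abel

theorem Finset.sum_range_two_mul_mul_pow_of_periodic {R : Type*} [CommSemiring R] {f : ℕ → R}
    {n : ℕ} (hf : Function.Periodic f n) (x : R) :
    ∑ m ∈ range (2 * n), f m * x ^ m = (x ^ n + 1) * ∑ m ∈ range n, f m * x ^ m := by
  rw [two_mul, sum_range_add, add_mul, one_mul, add_comm, mul_sum]
  congr 1
  refine sum_congr rfl fun m _ => ?_
  rw [add_comm n m, hf m, pow_add]
  ring

theorem legendreSym.periodic (p : ℕ) [Fact p.Prime] :
    Function.Periodic (fun m : ℕ => legendreSym p m) p := fun m => by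
  simp only [Nat.cast_add, legendreSym.mod p (m + p : ℤ), Int.add_emod_right, ← legendreSym.mod]

theorem stmt3 (p : ℕ) [Fact p.Prime] (hp2 : p ≠ 2) :
    (∑ t ∈ Finset.Icc 1 (p - 1), legendreSym p (2 * t : ℤ) * 4 ^ (2 * t)) +
      (∑ t ∈ (Finset.range p).erase ((p - 1) / 2),
        legendreSym p (2 * t + 1 : ℤ) * 4 ^ (2 * t + 1)) ≡ 0
      [ZMOD (4:ℤ) ^ p + 1] := by
  set f : ℕ → ℤ := fun m => legendreSym p m * 4 ^ m with hf
  have hp : p.Prime := Fact.out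
  have hmid : 2 * ((p - 1) / 2) + 1 = p := by
    have := Nat.odd_iff.mp (hp.odd_of_ne_two hp2); omega
  have hzero : ∀ m : ℕ, p ∣ m → f m = 0 := fun m hm => by
    simp [hf, legendreSym.eq_zero_iff, (ZMod.natCast_eq_zero_iff m p).mpr hm]
  have heven : ∑ t ∈ Icc 1 (p - 1), f (2 * t) = ∑ t ∈ range p, f (2 * t) := by
    rw [range_eq_Ico, ← Ico_add_one_right_eq_Icc, Nat.sub_add_cancel hp.one_le,
      sum_eq_sum_Ico_succ_bot hp.pos, hzero 0 (dvd_zero p), zero_add]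
  have hodd : ∑ t ∈ (range p).erase ((p - 1) / 2), f (2 * t + 1) =
      ∑ t ∈ range p, f (2 * t + 1) := by
    refine sum_erase _ ?_
    rw [hmid, hzero p dvd_rfl]
  refine Int.modEq_zero_iff_dvd.mpr ⟨∑ m ∈ range p, f m, ?_⟩
  calc _ = ∑ t ∈ range p, f (2 * t) + ∑ t ∈ range p, f (2 * t + 1) := by
        rw [← heven, ← hodd]; push_cast [hf]; rfl
    _ = ∑ m ∈ range (2 * p), f m := (sum_range_two_mul f p).symm
    _ = ((4 : ℤ) ^ p + 1) * ∑ m ∈ range p, f m :=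
        sum_range_two_mul_mul_pow_of_periodic (legendreSym.periodic p) 4
end

section
/- Let p be an odd prime and let d > 1 be a divisor of 4^p - 1 with gcd(d, 3) = 1 and such that d divides (∑_{t=1}^{p-1} (t/p)·4^t)^2. Then d = p, and moreover this is impossible; i.e., no such d exists. -/
/-!
Let `q` be a prime factor of `d`; it is odd and `q ≠ 3`, so `4` is a primitive `p`-th root of
unity in `𝔽_q` and `S = ∑ (t/p) 4^t` reduces to the quadratic Gauss sum over `ℤ/p`. Hence
`S² ≡ (-1/p) p (mod q)`, and `q ∣ S²` forces `q = p`. But then `p ∣ 4^p - 1 ≡ 4 - 1`,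
i.e. `q ∣ 3`.
-/

open Finset MulChar AddChar

lemma ZMod.sum_range_natCast {M : Type*} [AddCommMonoid M] (n : ℕ) [NeZero n] (f : ZMod n → M) :
    ∑ t ∈ range n, f t = ∑ x : ZMod n, f x :=
  sum_nbij' (↑) ZMod.val (fun _ _ ↦ mem_univ _) (fun x _ ↦ mem_range.mpr x.val_lt)
    (fun _ ht ↦ ZMod.val_cast_of_lt (mem_range.mp ht)) (fun x _ ↦ ZMod.natCast_zmod_val x)
    (fun _ _ ↦ rfl)

section LegendreChar

variable (p : ℕ) [Fact p.Prime] (R : Type*) [CommRing R]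

noncomputable def legendreChar : MulChar (ZMod p) R :=
  (quadraticChar (ZMod p)).ringHomComp (Int.castRingHom R)

lemma legendreChar_intCast (a : ℤ) : legendreChar p R a = legendreSym p a := rfl

lemma legendreChar_natCast (n : ℕ) : legendreChar p R n = legendreSym p n := by
  rw [← legendreChar_intCast, Int.cast_natCast]

lemma legendreChar_isQuadratic : (legendreChar p R).IsQuadratic :=
  (quadraticChar_isQuadratic _).comp _

variable {p R}

lemma legendreChar_ne_one [Nontrivial R] (hp : p ≠ 2) (hR : ringChar R ≠ 2) :
    legendreChar p R ≠ 1 := by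
  obtain ⟨a, ha⟩ := quadraticChar_exists_neg_one' (F := ZMod p) (by rwa [ZMod.ringChar_zmod_n])
  refine ne_one_iff.mpr ⟨a, ?_⟩
  simpa [legendreChar, ha] using Ring.neg_one_ne_one_of_char_ne_two hR

lemma intCast_sum_legendreSym_mul_pow {a : ℤ} (ha : (a : R) ^ p = 1) :
    ((∑ t ∈ Icc 1 (p - 1), legendreSym p t * a ^ t : ℤ) : R) =
      gaussSum (legendreChar p R) (zmodChar p ha) := by
  have hrange : range p = insert 0 (Icc 1 (p - 1)) := by
    ext t
    simp only [mem_range, mem_insert, mem_Icc]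
    have := (Fact.out : p.Prime).pos
    omega
  rw [gaussSum, ← ZMod.sum_range_natCast, hrange, sum_insert (by simp)]
  simp only [legendreChar_natCast, zmodChar_apply', Nat.cast_zero, MulChar.map_zero,
    zero_mul, zero_add, Int.cast_sum, Int.cast_mul, Int.cast_pow]

end LegendreChar

lemma intCast_dvd_sub_one_of_dvd_pow_sub_one {p : ℕ} [Fact p.Prime] {a : ℤ}
    (h : (p : ℤ) ∣ a ^ p - 1) : (p : ℤ) ∣ a - 1 := by
  rw [← ZMod.intCast_zmod_eq_zero_iff_dvd] at h ⊢
  push_cast at h ⊢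
  rwa [ZMod.pow_card] at h

lemma eq_of_dvd_sq_sum_legendreSym_mul_pow {p q : ℕ} [Fact p.Prime] [Fact q.Prime] (hp : p ≠ 2)
    (hq : q ≠ 2) {a : ℤ} (hpow : (q : ℤ) ∣ a ^ p - 1) (hsub : ¬(q : ℤ) ∣ a - 1)
    (hsq : (q : ℤ) ∣ (∑ t ∈ Icc 1 (p - 1), legendreSym p t * a ^ t) ^ 2) : q = p := by
  rw [← ZMod.intCast_zmod_eq_zero_iff_dvd] at hpow hsub hsq
  push_cast at hpow hsub
  have ha : (a : ZMod q) ^ p = 1 := sub_eq_zero.mp hpow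
  have hprim : IsPrimitiveRoot (a : ZMod q) p :=
    orderOf_eq_prime ha (sub_ne_zero.mp hsub) ▸ IsPrimitiveRoot.orderOf _
  have hgauss := gaussSum_sq (χ := legendreChar p (ZMod q)) (ψ := zmodChar p ha)
    (legendreChar_ne_one hp (by rwa [ZMod.ringChar_zmod_n])) (legendreChar_isQuadratic p _)
    (zmodChar_primitive_of_primitive_root p hprim)
  rw [ZMod.card] at hgauss
  rw [Int.cast_pow, intCast_sum_legendreSym_mul_pow ha, hgauss] at hsq
  have hp0 : ((p : ℕ) : ZMod q) = 0 :=
    (mul_eq_zero.mp hsq).resolve_left (isUnit_one.neg.map _).ne_zero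
  exact (Nat.prime_dvd_prime_iff_eq Fact.out Fact.out).mp ((ZMod.natCast_eq_zero_iff _ _).mp hp0)

theorem stmt5 (p : ℕ) [Fact p.Prime] (hp2 : p ≠ 2) (d : ℕ) (hd1 : 1 < d)
    (hdvd : (d : ℤ) ∣ (4:ℤ) ^ p - 1) (hgcd : Nat.gcd d 3 = 1)
    (hdiv : (d : ℤ) ∣ (∑ t ∈ Finset.Icc 1 (p - 1), legendreSym p (t : ℤ) * 4 ^ t) ^ 2) :
    d = p ∧ False := by
  set q := d.minFac
  have : Fact q.Prime := ⟨Nat.minFac_prime hd1.ne'⟩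
  have hqd : (q : ℤ) ∣ d := Int.natCast_dvd_natCast.mpr d.minFac_dvd
  have hq3 : ¬(q : ℤ) ∣ 4 - 1 := by
    rw [show (4 : ℤ) - 1 = (3 : ℕ) by norm_num, Int.natCast_dvd_natCast]
    intro h3
    have := Nat.dvd_gcd d.minFac_dvd h3
    rw [hgcd, Nat.dvd_one] at this
    exact (Fact.out : q.Prime).ne_one this
  have hq2 : q ≠ 2 := by
    intro hq
    have hodd : (2 : ℤ) ∣ 4 ^ p - 1 := by exact_mod_cast hq ▸ hqd.trans hdvd
    have heven : (2 : ℤ) ∣ 4 ^ p := dvd_pow (by norm_num) (Fact.out : p.Prime).ne_zero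
    omega
  have hqp := eq_of_dvd_sq_sum_legendreSym_mul_pow hp2 hq2 (hqd.trans hdvd) hq3 (hqd.trans hdiv)
  exact absurd (intCast_dvd_sub_one_of_dvd_pow_sub_one (hqp ▸ hqd.trans hdvd)) (hqp ▸ hq3)
end

section
/- Let p be a prime with p ≡ 1 (mod 4), and define the quaternary sequence g^1 of period 2p by g^1_t = 2·b_t if t is even and g^1_t = 2·c_t + 1 if t is odd, where b and c are the Legendre sequences of period p (b_0=0, b_t=0 for t a quadratic residue mod p, b_t=1 for t a non-residue; c_0=1, c_t=0 for t a quadratic residue, c_t=1 for a non-residue). Let G = ∑_{t=0}^{2p-1} g^1_t · 4^t. Then gcd(G, 4^p - 1) = 3. -/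
/-!
Since `4 ^ p ≡ 1` modulo `N = 4 ^ p - 1`, the terms `g¹_t` and `g¹_{t+p}` of `G` get the same
weight `4 ^ t` modulo `N`; as `p` is odd they have opposite parities, so their sum is
`2 b_t + 2 c_t + 1 = 3 - 2 (t/p)`. Hence `G ≡ -2 L (mod N)` with `L = ∑_{t<p} (t/p) 4 ^ t`, and
`gcd(G, N) = gcd(L, N)` because `N` is odd. Now `3 ∣ L` since `4 ≡ 1 (mod 3)` and the Legendre
symbols sum to zero, while `9 ∤ N` since `3 ∤ p`. Finally, a prime `q ≠ 3` dividing `N` makes `4` a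
primitive `p`-th root of unity in `𝔽_q`, where `L` becomes a Gauss sum of the quadratic
character, which does not vanish.
-/

/-- The Legendre sequence `b` of period `p`: `b 0 = 0`, `b t = 0` for `t` a quadratic
residue mod `p`, `b t = 1` for `t` a quadratic non-residue. -/
def legb (p : ℕ) [Fact p.Prime] (t : ℕ) : ℤ :=
  if (t : ZMod p) = 0 then 0 else (1 - legendreSym p (t : ℤ)) / 2

/-- The Legendre sequence `c` of period `p`: `c 0 = 1`, `c t = b t` otherwise. -/
def legc (p : ℕ) [Fact p.Prime] (t : ℕ) : ℤ :=
  if (t : ZMod p) = 0 then 1 else (1 - legendreSym p (t : ℤ)) / 2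

open Finset

theorem sub_one_dvd_sum_range_two_mul_sub {R : Type*} [CommRing R] (f : ℕ → R) (x : R)
    (n : ℕ) :
    x ^ n - 1 ∣ ∑ t ∈ range (2 * n), f t * x ^ t - ∑ t ∈ range n, (f t + f (n + t)) * x ^ t := by
  refine ⟨∑ t ∈ range n, f (n + t) * x ^ t, ?_⟩
  simp only [two_mul, sum_range_add, add_mul, sum_add_distrib, add_sub_add_left_eq_sub,
    ← sum_sub_distrib, mul_sum]
  exact sum_congr rfl fun t _ => by ring

theorem sub_one_dvd_sum_mul_pow_sub_sum {R : Type*} [CommRing R] (f : ℕ → R) (x : R)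
    (s : Finset ℕ) : x - 1 ∣ ∑ t ∈ s, f t * x ^ t - ∑ t ∈ s, f t := by
  rw [← sum_sub_distrib]
  refine dvd_sum fun t _ => ?_
  simpa [mul_sub] using (sub_dvd_pow_sub_pow x 1 t).mul_left (f t)

theorem sum_range_natCast_zmod {M : Type*} [AddCommMonoid M] (n : ℕ) [NeZero n]
    (f : ZMod n → M) : ∑ t ∈ range n, f t = ∑ a : ZMod n, f a := by
  refine sum_nbij' (↑) ZMod.val (by simp) (fun a _ => by simpa using ZMod.val_lt a)
    (fun t ht => ZMod.val_natCast_of_lt (mem_range.mp ht)) (fun a _ => ZMod.natCast_zmod_val a)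
    fun _ _ => rfl

theorem not_nine_dvd_four_pow_sub_one {n : ℕ} (hn : ¬ 3 ∣ n) : ¬ (9 : ℤ) ∣ 4 ^ n - 1 := by
  intro h9
  have h := (ZMod.intCast_zmod_eq_zero_iff_dvd (4 ^ n - 1) 9).mpr (mod_cast h9)
  push_cast at h
  rw [pow_eq_pow_mod n (by decide : (4 : ZMod 9) ^ 3 = 1)] at h
  have : n % 3 = 1 ∨ n % 3 = 2 := by omega
  rcases this with hn | hn <;> rw [hn] at h <;> revert h <;> decide

theorem Nat.eq_of_dvd_of_not_sq_dvd_of_unique_prime_dvd {n p : ℕ} (hpn : p ∣ n)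
    (hpp : ¬ p ^ 2 ∣ n) (h : ∀ q, q.Prime → q ∣ n → q = p) : n = p := by
  obtain ⟨e, rfl⟩ := hpn
  suffices e = 1 by simp [this]
  refine Nat.eq_one_iff_not_exists_prime_dvd.mpr fun q hq hqe => ?_
  obtain rfl := h q hq (dvd_mul_of_dvd_right hqe p)
  exact hpp (by rw [sq]; exact mul_dvd_mul_left q hqe)

section Legendre

variable (p : ℕ) [Fact p.Prime]

def quaternarySeq (t : ℕ) : ℤ :=
  if t % 2 = 0 then 2 * legb p t else 2 * legc p t + 1

theorem legb_add_legc (t : ℕ) : legb p t + legc p t = 1 - legendreSym p t := by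
  unfold legb legc
  split_ifs with ht
  · simp [legendreSym, ht]
  · rcases legendreSym.eq_one_or_neg_one p (a := t) (by exact_mod_cast ht) with h | h <;>
      simp [h]

theorem legb_add_left (t : ℕ) : legb p (p + t) = legb p t := by
  simp [legb, legendreSym]

theorem legc_add_left (t : ℕ) : legc p (p + t) = legc p t := by
  simp [legc, legendreSym]

theorem quaternarySeq_add_quaternarySeq_add_left (hp : p ≠ 2) (t : ℕ) :
    quaternarySeq p t + quaternarySeq p (p + t) = 3 - 2 * legendreSym p t := by
  have hodd := Nat.odd_iff.mp ((Fact.out : p.Prime).odd_of_ne_two hp)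
  have hbc := legb_add_legc p t
  unfold quaternarySeq
  rw [legb_add_left, legc_add_left]
  split_ifs <;> omega

theorem sum_range_legendreSym (hp : p ≠ 2) : ∑ t ∈ range p, legendreSym p t = 0 := by
  simp only [legendreSym, Int.cast_natCast]
  rw [sum_range_natCast_zmod p (quadraticChar (ZMod p))]
  exact quadraticChar_sum_zero (by rwa [ZMod.ringChar_zmod_n])

theorem sum_range_legendreSym_mul_pow_ne_zero {F : Type*} [Field F] (hF : ringChar F ≠ 2)
    (hp : p ≠ 2) {ζ : F} (hζ : IsPrimitiveRoot ζ p) :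
    ∑ t ∈ range p, (legendreSym p t : F) * ζ ^ t ≠ 0 := by
  have := hζ.neZero'
  set χ := (quadraticChar (ZMod p)).ringHomComp (Int.castRingHom F)
  have hχ : χ ≠ 1 := by
    obtain ⟨a, ha⟩ :=
      quadraticChar_exists_neg_one' (F := ZMod p) (by rwa [ZMod.ringChar_zmod_n])
    refine MulChar.ne_one_iff.mpr ⟨a, ?_⟩
    simpa [χ, ha] using Ring.neg_one_ne_one_of_char_ne_two hF
  have hgauss : gaussSum χ (AddChar.zmodChar p hζ.pow_eq_one) =
      ∑ t ∈ range p, (legendreSym p t : F) * ζ ^ t := by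
    rw [gaussSum, ← sum_range_natCast_zmod]
    refine sum_congr rfl fun t _ => ?_
    simp [χ, legendreSym, AddChar.zmodChar_apply']
  rw [← hgauss]
  exact gaussSum_ne_zero_of_nontrivial (by simpa using NeZero.ne (p : F)) hχ
    (AddChar.zmodChar_primitive_of_primitive_root p hζ)

theorem sum_range_legendreSym_mul_four_pow_ne_zero (hp : p ≠ 2) {q : ℕ} [Fact q.Prime]
    (hq : q ≠ 3) (h4 : (4 : ZMod q) ^ p = 1) :
    ∑ t ∈ range p, (legendreSym p t : ZMod q) * 4 ^ t ≠ 0 := by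
  have hq2 : q ≠ 2 := by
    intro hq
    have h2 : ((2 : ℕ) : ZMod q) = 0 := (ZMod.natCast_eq_zero_iff 2 q).mpr hq.dvd
    have h40 : (4 : ZMod q) = 0 := by push_cast at h2; linear_combination 2 * h2
    rw [h40, zero_pow (Fact.out : p.Prime).ne_zero] at h4
    exact zero_ne_one h4
  have h41 : (4 : ZMod q) ≠ 1 := by
    intro h41
    have h3 : ((3 : ℕ) : ZMod q) = 0 := by linear_combination h41
    exact hq ((Nat.prime_dvd_prime_iff_eq Fact.out Nat.prime_three).mp
      ((ZMod.natCast_eq_zero_iff 3 q).mp h3))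
  refine sum_range_legendreSym_mul_pow_ne_zero p (by rwa [ZMod.ringChar_zmod_n]) hp ?_
  exact orderOf_eq_prime h4 h41 ▸ IsPrimitiveRoot.orderOf _

theorem gcd_sum_range_legendreSym_mul_four_pow (hp2 : p ≠ 2) (hp3 : p ≠ 3) :
    Int.gcd (∑ t ∈ range p, legendreSym p t * 4 ^ t) (4 ^ p - 1) = 3 := by
  set L := ∑ t ∈ range p, legendreSym p t * (4 : ℤ) ^ t
  have h3L : (3 : ℤ) ∣ L := by
    simpa [sum_range_legendreSym p hp2] using
      sub_one_dvd_sum_mul_pow_sub_sum (fun t => legendreSym p t) (4 : ℤ) (range p)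
  have h3N : (3 : ℤ) ∣ 4 ^ p - 1 := by simpa using sub_dvd_pow_sub_pow (4 : ℤ) 1 p
  refine Nat.eq_of_dvd_of_not_sq_dvd_of_unique_prime_dvd ?_ ?_ ?_
  · exact_mod_cast Int.dvd_gcd h3L h3N
  · have h3p : ¬ 3 ∣ p := fun h3p =>
      hp3 ((Nat.prime_dvd_prime_iff_eq Nat.prime_three Fact.out).mp h3p).symm
    exact fun h9 => not_nine_dvd_four_pow_sub_one h3p
      ((Int.natCast_dvd_natCast.mpr h9).trans (Int.gcd_dvd_right L _))
  · intro q hq hqd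
    by_contra hq3
    have := Fact.mk hq
    have hqL : (L : ZMod q) = 0 := (ZMod.intCast_zmod_eq_zero_iff_dvd _ q).mpr
      ((Int.natCast_dvd_natCast.mpr hqd).trans (Int.gcd_dvd_left _ _))
    have hqN : (((4 : ℤ) ^ p - 1 : ℤ) : ZMod q) = 0 :=
      (ZMod.intCast_zmod_eq_zero_iff_dvd _ q).mpr
        ((Int.natCast_dvd_natCast.mpr hqd).trans (Int.gcd_dvd_right _ _))
    push_cast [L] at hqL hqN
    exact sum_range_legendreSym_mul_four_pow_ne_zero p hp2 hq3 (sub_eq_zero.mp hqN) hqL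

theorem four_pow_sub_one_dvd_sum_quaternarySeq_add (hp : p ≠ 2) :
    (4 : ℤ) ^ p - 1 ∣ ∑ t ∈ range (2 * p), quaternarySeq p t * 4 ^ t +
      2 * ∑ t ∈ range p, legendreSym p t * 4 ^ t := by
  have h := sub_one_dvd_sum_range_two_mul_sub (quaternarySeq p) (4 : ℤ) p
  have hfold : ∑ t ∈ range p, (quaternarySeq p t + quaternarySeq p (p + t)) * (4 : ℤ) ^ t =
      4 ^ p - 1 - 2 * ∑ t ∈ range p, legendreSym p t * 4 ^ t := by
    simp only [quaternarySeq_add_quaternarySeq_add_left p hp, sub_mul, mul_assoc,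
      sum_sub_distrib, ← mul_sum]
    linear_combination geom_sum_mul (4 : ℤ) p
  rw [hfold] at h
  exact dvd_sub_self_right.mp (by convert h using 1; ring)

end Legendre

theorem stmt6 (p : ℕ) [Fact p.Prime] (h1 : p % 4 = 1) :
    Int.gcd
      (∑ t ∈ Finset.range (2 * p),
        (if t % 2 = 0 then 2 * legb p t else 2 * legc p t + 1) * 4 ^ t)
      ((4:ℤ) ^ p - 1) = 3 := by
  have hp2 : p ≠ 2 := by rintro rfl; norm_num at h1
  have hp3 : p ≠ 3 := by rintro rfl; norm_num at h1
  have hN : Odd ((4 : ℤ) ^ p - 1) :=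
    (Even.pow_of_ne_zero (by decide) (Fact.out : p.Prime).ne_zero).sub_odd odd_one
  have h2N : Int.gcd 2 ((4 : ℤ) ^ p - 1) = 1 := Nat.coprime_two_left.mpr hN.natAbs
  obtain ⟨c, hc⟩ := four_pow_sub_one_dvd_sum_quaternarySeq_add p hp2
  change Int.gcd (∑ t ∈ range (2 * p), quaternarySeq p t * 4 ^ t) _ = 3
  rw [eq_sub_of_add_eq hc, sub_eq_neg_add, Int.gcd_add_mul_left_left, Int.neg_gcd,
    Int.gcd_mul_right_left_of_gcd_eq_one h2N]
  exact gcd_sum_range_legendreSym_mul_four_pow p hp2 hp3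
end

section
/- Let n ≥ 2 and let s be a binary sequence of period 2^n - 1 with ideal autocorrelation (all out-of-phase autocorrelations equal -1) and weight 2^{n-1}. Let T = ∑_{t=0}^{2^n-2} (-1)^{s_t}·4^t. Then for any prime r dividing both T and 4^{2^n-1} - 1, one has r divides 2^n - (4^{2^n-1}-1)/3; consequently gcd(T, 4^{2^n-1} - 1) = 1. -/
/-!
Put ε_t = (-1)^{s_t} and N = 2^n - 1, and work modulo a prime r dividing T and 4^N - 1, so that
4 is invertible with 4^N = 1. Then T' = ∑_u ε_u 4^{-u} satisfies T·T' = ∑_f 4^f C(f), where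
C(f) = ∑_l ε_{l+f} ε_l is the periodic autocorrelation, because shifting the summation index of a
periodic sum does not change it. Ideal autocorrelation (C(0) = N, C(f) = -1 otherwise) turns the
right side into N + 1 - ∑_f 4^f = 2^n - (4^N - 1)/3, and T ≡ 0 gives the divisibility. This number
is ≡ 1 mod 3 and ≡ 2^n modulo the odd number (4^N - 1)/3, hence coprime to 4^N - 1: so no prime
divides both T and 4^N - 1.
-/

open Finset Function

theorem Function.Periodic.sum_range_add {M : Type*} [AddCommMonoid M] {g : ℕ → M} {N : ℕ}
    (hg : Periodic g N) (u : ℕ) : ∑ f ∈ range N, g (u + f) = ∑ t ∈ range N, g t := by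
  calc ∑ f ∈ range N, g (u + f) = ∑ t ∈ Ico u (u + N), g (t % N) := by
        rw [sum_Ico_eq_sum_range, Nat.add_sub_cancel_left]; simp only [hg.map_mod_nat]
    _ = ∑ t ∈ range N, g t := by
        change ((Multiset.Ico u (u + N)).map (g ∘ (· % N))).sum = _
        rw [← Multiset.map_map, Nat.multiset_Ico_map_mod]; rfl

theorem sum_mul_sum_eq_sum_pow_mul_sum_shift {R : Type*} [CommSemiring R] {N : ℕ} {a b : ℕ → R}
    (ha : Periodic a N) {x y : R} (hxN : x ^ N = 1) (hxy : x * y = 1) :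
    (∑ t ∈ range N, a t * x ^ t) * ∑ u ∈ range N, b u * y ^ u =
      ∑ f ∈ range N, x ^ f * ∑ u ∈ range N, a (u + f) * b u := by
  have hg : Periodic (fun t => a t * x ^ t) N := fun t => by simp only [ha t, pow_add, hxN, mul_one]
  calc (∑ t ∈ range N, a t * x ^ t) * ∑ u ∈ range N, b u * y ^ u
      = ∑ u ∈ range N, (∑ f ∈ range N, a (u + f) * x ^ (u + f)) * (b u * y ^ u) := by
        simp only [mul_sum, hg.sum_range_add]
    _ = ∑ u ∈ range N, ∑ f ∈ range N, x ^ f * (a (u + f) * b u) := by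
        refine sum_congr rfl fun u _ => ?_
        rw [sum_mul]
        refine sum_congr rfl fun f _ => ?_
        calc a (u + f) * x ^ (u + f) * (b u * y ^ u)
            = x ^ f * (a (u + f) * b u) * (x * y) ^ u := by ring
          _ = x ^ f * (a (u + f) * b u) := by rw [hxy, one_pow, mul_one]
    _ = ∑ f ∈ range N, x ^ f * ∑ u ∈ range N, a (u + f) * b u := by
        rw [sum_comm]; simp only [mul_sum]

def autocorrelation (s : ℕ → ℕ) (N f : ℕ) : ℤ := ∑ l ∈ range N, (-1 : ℤ) ^ (s (l + f) + s l)

theorem autocorrelation_zero (s : ℕ → ℕ) (N : ℕ) : autocorrelation s N 0 = N := by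
  simp [autocorrelation, ← two_mul, pow_mul]

theorem sum_pow_mul_autocorrelation {R : Type*} [CommRing R] {s : ℕ → ℕ} {N : ℕ} (hN : 0 < N)
    (hauto : ∀ f, 0 < f → f < N → autocorrelation s N f = -1) (x : R) :
    ∑ f ∈ range N, x ^ f * (autocorrelation s N f : R) = N + 1 - ∑ f ∈ range N, x ^ f := by
  obtain ⟨M, rfl⟩ := Nat.exists_eq_add_one_of_ne_zero hN.ne'
  have hshift : ∀ f ∈ range M, x ^ (f + 1) * (autocorrelation s (M + 1) (f + 1) : R) =
      -x ^ (f + 1) := fun f hf => by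
    rw [hauto (f + 1) f.succ_pos (by simpa using hf)]; simp
  rw [sum_range_succ', sum_range_succ', sum_congr rfl hshift, autocorrelation_zero]
  push_cast
  rw [sum_neg_distrib]
  ring

theorem dvd_of_ideal_autocorrelation {N : ℕ} (hN : 0 < N) {s : ℕ → ℕ} (hper : Periodic s N)
    (hauto : ∀ f, 0 < f → f < N → autocorrelation s N f = -1) {x : ℤ} {r : ℕ}
    (hxN : (r : ℤ) ∣ x ^ N - 1) (hT : (r : ℤ) ∣ ∑ t ∈ range N, (-1) ^ s t * x ^ t) :
    (r : ℤ) ∣ N + 1 - ∑ f ∈ range N, x ^ f := by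
  simp only [← ZMod.intCast_zmod_eq_zero_iff_dvd] at hxN hT ⊢
  push_cast at hxN hT ⊢
  set ε : ℕ → ZMod r := fun t => (-1) ^ s t
  have hε : Periodic ε N := fun t => by simp only [ε, hper t]
  have hx : (x : ZMod r) ^ N = 1 := sub_eq_zero.mp hxN
  -- `x ^ (N - 1)` is the inverse of `x` modulo `r`
  have hxy : (x : ZMod r) * x ^ (N - 1) = 1 := by rw [← pow_succ', Nat.sub_add_cancel hN, hx]
  have hcorr : ∀ f, ∑ u ∈ range N, ε (u + f) * ε u = (autocorrelation s N f : ZMod r) := fun f => by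
    simp [ε, autocorrelation, pow_add]
  have key := sum_mul_sum_eq_sum_pow_mul_sum_shift (b := ε) hε hx hxy
  simp only [hcorr, sum_pow_mul_autocorrelation hN hauto] at key
  rw [← key, hT, zero_mul]

theorem geom_sum_four_eq (N : ℕ) : ∑ f ∈ range N, (4 : ℤ) ^ f = (4 ^ N - 1) / 3 :=
  (Int.ediv_eq_of_eq_mul_left (by norm_num)
    (by linear_combination (geom_sum_mul (4 : ℤ) N).symm)).symm

theorem isCoprime_two_pow_sub_geom_sum_four (n : ℕ) :
    IsCoprime (2 ^ n - ∑ f ∈ range (2 ^ n - 1), (4 : ℤ) ^ f) (4 ^ (2 ^ n - 1) - 1) := by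
  set N := 2 ^ n - 1
  set S := ∑ f ∈ range N, (4 : ℤ) ^ f
  have hS : 4 ^ N - 1 = 3 * S := by linear_combination (geom_sum_mul (4 : ℤ) N).symm
  have hN : (N : ℤ) = 2 ^ n - 1 := by rw [Nat.cast_sub Nat.one_le_two_pow]; push_cast; ring
  have hmod3 : (3 : ℤ) ∣ S - N := by
    have h4 : (4 : ZMod 3) = 1 := by decide
    rw [← Nat.cast_ofNat, ← ZMod.intCast_zmod_eq_zero_iff_dvd]
    simp [S, h4]
  obtain ⟨k, hk⟩ := hmod3
  have h3 : IsCoprime (2 ^ n - S) 3 := ⟨1, k, by linear_combination -hN - hk⟩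
  have hpow : IsCoprime ((2 : ℤ) ^ n) S := by
    have h4N : IsCoprime ((4 : ℤ) ^ N) S := ⟨1, -3, by linear_combination hS⟩
    refine h4N.of_isCoprime_of_dvd_left ?_
    rw [show (4 : ℤ) = 2 ^ 2 by norm_num, ← pow_mul]
    exact pow_dvd_pow 2 (by have := n.lt_two_pow_self; omega)
  have hS' : IsCoprime (2 ^ n - S) S := by simpa [sub_eq_add_neg] using hpow.add_mul_left_left (-1)
  rw [hS]
  exact h3.mul_right hS'

theorem Int.gcd_eq_one_of_isCoprime_of_forall_prime_dvd {a b d : ℤ} (hd : IsCoprime d b)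
    (h : ∀ p : ℕ, p.Prime → (p : ℤ) ∣ a → (p : ℤ) ∣ b → (p : ℤ) ∣ d) : Int.gcd a b = 1 := by
  refine Nat.coprime_of_dvd fun p hp hpa hpb => ?_
  rw [← Int.natCast_dvd] at hpa hpb
  exact (Nat.prime_iff_prime_int.mp hp).not_isUnit (hd.isUnit_of_dvd' (h p hp hpa hpb) hpb)

theorem stmt13_general (n : ℕ) (hn : 2 ≤ n) (s : ℕ → ℕ)
    (hper : ∀ t, s (t + (2 ^ n - 1)) = s t)
    (hauto : ∀ f, 0 < f → f < 2 ^ n - 1 →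
      ∑ l ∈ Finset.range (2 ^ n - 1), (-1 : ℤ) ^ (s (l + f) + s l) = -1)
    (T : ℤ) (hT : T = ∑ t ∈ Finset.range (2 ^ n - 1), (-1 : ℤ) ^ (s t) * 4 ^ t) :
    (∀ r : ℕ, r.Prime → (r : ℤ) ∣ T → (r : ℤ) ∣ (4:ℤ) ^ (2 ^ n - 1) - 1 →
      (r : ℤ) ∣ (2 ^ n : ℤ) - ((4:ℤ) ^ (2 ^ n - 1) - 1) / 3) ∧
    Int.gcd T ((4:ℤ) ^ (2 ^ n - 1) - 1) = 1 := by
  have hN : 0 < 2 ^ n - 1 := by have := Nat.pow_le_pow_right two_pos hn; omega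
  have hdvd : ∀ r : ℕ, r.Prime → (r : ℤ) ∣ T → (r : ℤ) ∣ (4 : ℤ) ^ (2 ^ n - 1) - 1 →
      (r : ℤ) ∣ 2 ^ n - ∑ f ∈ range (2 ^ n - 1), (4 : ℤ) ^ f := fun r _ hrT hrM => by
    simpa [Nat.cast_sub Nat.one_le_two_pow] using
      dvd_of_ideal_autocorrelation hN hper hauto hrM (hT ▸ hrT)
  rw [← geom_sum_four_eq]
  exact ⟨hdvd, Int.gcd_eq_one_of_isCoprime_of_forall_prime_dvd
    (isCoprime_two_pow_sub_geom_sum_four n) hdvd⟩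

theorem stmt13 (n : ℕ) (hn : 2 ≤ n) (s : ℕ → ℕ)
    (hs01 : ∀ t, s t = 0 ∨ s t = 1)
    (hper : ∀ t, s (t + (2 ^ n - 1)) = s t)
    (hauto : ∀ f, 0 < f → f < 2 ^ n - 1 →
      ∑ l ∈ Finset.range (2 ^ n - 1), (-1 : ℤ) ^ (s (l + f) + s l) = -1)
    (hw : ((Finset.range (2 ^ n - 1)).filter (fun t => s t = 1)).card = 2 ^ (n - 1))
    (T : ℤ) (hT : T = ∑ t ∈ Finset.range (2 ^ n - 1), (-1 : ℤ) ^ (s t) * 4 ^ t) :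
    (∀ r : ℕ, r.Prime → (r : ℤ) ∣ T → (r : ℤ) ∣ (4:ℤ) ^ (2 ^ n - 1) - 1 →
      (r : ℤ) ∣ (2 ^ n : ℤ) - ((4:ℤ) ^ (2 ^ n - 1) - 1) / 3) ∧
    Int.gcd T ((4:ℤ) ^ (2 ^ n - 1) - 1) = 1 :=
  stmt13_general n hn s hper hauto T hT
end

section
/- Let n ≥ 2, let s be a binary sequence of period 2^n - 1 with ideal autocorrelation, with characteristic set D_0 = {t : s_t = 1}, and define the quaternary sequence g^3 of period 2(2^n - 1) by: g^3_t = 0 if (t mod 2, t mod 2^n-1) ∈ {0}×D̄_0; 1 if ∈ {1}×D̄_0; 2 if ∈ {0}×D_0; 3 if ∈ {1}×D_0 (using CRT Z_{2(2^n-1)} ≅ Z_2 × Z_{2^n-1}). Let G = ∑_{t=0}^{2^{n+1}-3} g^3_t·4^t. Then G = 4·((4^{2^n-1}+1)/5)·((4^{2^n-1}-1)/3) + 2·(1 + 4^{2^n-1})·∑_{t=0}^{2^n-2} s_t·4^t. -/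
/-!
Split each digit `g_t = (t mod 2) + 2 s_{t mod N}`, where `N = 2^n - 1`. The `s`-part is a sum over
two periods, hence `(1 + 4^N)` times the sum over one period. The parity part is
`4 (1 + 16 + ⋯ + 16^(N-1)) = 4 (16^N - 1) / 15`, and for odd `N` the factorisation
`16^N - 1 = (4^N + 1)(4^N - 1)` has `5 ∣ 4^N + 1` and `3 ∣ 4^N - 1`.
-/

open Finset

theorem sum_range_two_mul_mod_two_mul_pow {R : Type*} [CommSemiring R] (x : R) (m : ℕ) :
    ∑ t ∈ range (2 * m), ((t % 2 : ℕ) : R) * x ^ t = x * ∑ i ∈ range m, (x ^ 2) ^ i := by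
  induction m with
  | zero => simp
  | succ m ih =>
    rw [Nat.mul_succ, sum_range_succ, sum_range_succ, ih, sum_range_succ,
      Nat.mul_add_mod, Nat.mul_mod_right]
    simp only [Nat.cast_zero, zero_mul, add_zero, ← pow_mul]
    ring

theorem sum_range_two_mul_mod_mul_pow {R : Type*} [CommSemiring R] (f : ℕ → R) (x : R) (N : ℕ) :
    ∑ t ∈ range (2 * N), f (t % N) * x ^ t = (1 + x ^ N) * ∑ t ∈ range N, f t * x ^ t := by
  rw [two_mul, sum_range_add, add_mul, one_mul, mul_sum]
  congr 1 <;> refine sum_congr rfl fun t ht => ?_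
  · rw [Nat.mod_eq_of_lt (mem_range.mp ht)]
  · rw [Nat.add_mod_left, Nat.mod_eq_of_lt (mem_range.mp ht), pow_add]
    ring

theorem geom_sum_sixteen_eq_of_odd {N : ℕ} (hN : Odd N) :
    ∑ i ∈ range N, (16 : ℤ) ^ i = ((4 ^ N + 1) / 5) * ((4 ^ N - 1) / 3) := by
  have h5 : (5 : ℤ) ∣ 4 ^ N + 1 := by simpa using hN.add_dvd_pow_add_pow (4 : ℤ) 1
  have h3 : (3 : ℤ) ∣ 4 ^ N - 1 := by simpa using sub_dvd_pow_sub_pow (4 : ℤ) 1 N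
  have hgeom : (∑ i ∈ range N, (16 : ℤ) ^ i) * 15 = 16 ^ N - 1 := by
    simpa using geom_sum_mul (16 : ℤ) N
  obtain ⟨a, ha⟩ := h5
  obtain ⟨b, hb⟩ := h3
  rw [ha, hb, Int.mul_ediv_cancel_left a (by norm_num), Int.mul_ediv_cancel_left b (by norm_num)]
  refine mul_right_cancel₀ (show (15 : ℤ) ≠ 0 by norm_num) ?_
  calc (∑ i ∈ range N, (16 : ℤ) ^ i) * 15 = (4 ^ N + 1) * (4 ^ N - 1) := by
        rw [hgeom, show (16 : ℤ) = 4 ^ 2 by norm_num, ← pow_mul, mul_comm 2, pow_mul]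
        ring
    _ = a * b * 15 := by
        rw [ha, hb]
        ring

theorem stmt14_general (n : ℕ) (hn : 2 ≤ n) (s : ℕ → ℕ)
    (G : ℤ)
    (hG : G = ∑ t ∈ Finset.range (2 * (2 ^ n - 1)),
      ((t % 2 + 2 * s (t % (2 ^ n - 1)) : ℕ) : ℤ) * 4 ^ t) :
    G = 4 * (((4:ℤ) ^ (2 ^ n - 1) + 1) / 5) * (((4:ℤ) ^ (2 ^ n - 1) - 1) / 3) +
      2 * (1 + (4:ℤ) ^ (2 ^ n - 1)) *
        ∑ t ∈ Finset.range (2 ^ n - 1), (s t : ℤ) * 4 ^ t := by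
  have hodd : Odd (2 ^ n - 1) :=
    Nat.Even.sub_odd Nat.one_le_two_pow (Nat.even_pow.mpr ⟨even_two, by omega⟩) odd_one
  have hsplit : G = ∑ t ∈ range (2 * (2 ^ n - 1)), ((t % 2 : ℕ) : ℤ) * 4 ^ t
      + 2 * ∑ t ∈ range (2 * (2 ^ n - 1)), (s (t % (2 ^ n - 1)) : ℤ) * 4 ^ t := by
    rw [hG, mul_sum, ← sum_add_distrib]
    refine sum_congr rfl fun t _ => ?_
    push_cast
    ring
  rw [hsplit, sum_range_two_mul_mod_two_mul_pow, sum_range_two_mul_mod_mul_pow (fun t => (s t : ℤ)),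
    show (4 : ℤ) ^ 2 = 16 by norm_num, geom_sum_sixteen_eq_of_odd hodd]
  ring

theorem stmt14 (n : ℕ) (hn : 2 ≤ n) (s : ℕ → ℕ)
    (hs01 : ∀ t, s t = 0 ∨ s t = 1)
    (G : ℤ)
    (hG : G = ∑ t ∈ Finset.range (2 * (2 ^ n - 1)),
      ((t % 2 + 2 * s (t % (2 ^ n - 1)) : ℕ) : ℤ) * 4 ^ t) :
    G = 4 * (((4:ℤ) ^ (2 ^ n - 1) + 1) / 5) * (((4:ℤ) ^ (2 ^ n - 1) - 1) / 3) +
      2 * (1 + (4:ℤ) ^ (2 ^ n - 1)) *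
        ∑ t ∈ Finset.range (2 ^ n - 1), (s t : ℤ) * 4 ^ t :=
  stmt14_general n hn s G hG
end

section
/- With g^3 and G as in the Jang et al. construction (quaternary sequence of period 2(2^n-1) built via CRT and Gray map from a binary ideal-autocorrelation sequence s of period 2^n-1), gcd(G, 4^{2^n-1} + 1) = (4^{2^n-1} + 1)/5. -/
/-!
Let `N = 2 ^ n - 1`, which is odd, and `M = 4 ^ N + 1`. Since `4 ^ N ≡ -1 (mod M)`, the second
half of the period of `G` cancels the first half modulo `M`, except for the parity digits: the
`s`-digits agree, while `t` and `N + t` have opposite parities. Hence, whatever `s` is,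
`G ≡ -∑_{t<N} (-4) ^ t = -M / 5 (mod M)`, and `M / 5` divides `M`.
-/

open Finset

/-- The digit `g³_t ∈ {0, 1, 2, 3}` encoding the pair `(t mod 2, s_{t mod N})`. -/
def crtDigit (N : ℕ) (s : ℕ → ℕ) (t : ℕ) : ℕ := t % 2 + 2 * s (t % N)

theorem Odd.crtDigit_sub_crtDigit_add {N : ℕ} (hN : Odd N) (s : ℕ → ℕ) (t : ℕ) :
    (crtDigit N s t : ℤ) - crtDigit N s (N + t) = -(-1) ^ t := by
  have hN2 : N % 2 = 1 := Nat.odd_iff.mp hN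
  rw [crtDigit, crtDigit, Nat.add_mod_left, Nat.add_mod N, hN2]
  rcases Nat.even_or_odd t with ht | ht
  · rw [ht.neg_one_pow, Nat.even_iff.mp ht]
    push_cast
    ring
  · rw [ht.neg_one_pow, Nat.odd_iff.mp ht]
    push_cast
    ring

theorem Finset.sum_range_two_mul_mul_pow {R : Type*} [CommRing R] (f : ℕ → R) (x : R) (N : ℕ) :
    ∑ t ∈ range (2 * N), f t * x ^ t =
      ∑ t ∈ range N, (f t - f (N + t)) * x ^ t +
        (∑ t ∈ range N, f (N + t) * x ^ t) * (x ^ N + 1) := by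
  rw [two_mul, sum_range_add, sum_mul, ← sum_add_distrib, ← sum_add_distrib]
  refine sum_congr rfl fun t _ => ?_
  ring

theorem Odd.add_one_mul_geom_sum_neg {R : Type*} [CommRing R] (x : R) {N : ℕ} (hN : Odd N) :
    (x + 1) * ∑ t ∈ range N, (-x) ^ t = x ^ N + 1 := by
  have h := geom_sum_mul (-x) N
  rw [hN.neg_pow] at h
  linear_combination -h

theorem Int.gcd_neg_add_mul_of_dvd {q m : ℤ} (hq : 0 ≤ q) (hqm : q ∣ m) (k : ℤ) :
    ((-q + k * m).gcd m : ℤ) = q := by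
  rw [Int.gcd_add_mul_right_left, Int.neg_gcd, Int.gcd_eq_left hq hqm]

theorem stmt15_general (n : ℕ) (hn : 2 ≤ n) (s : ℕ → ℕ)
    (G : ℤ)
    (hG : G = ∑ t ∈ Finset.range (2 * (2 ^ n - 1)),
      ((t % 2 + 2 * s (t % (2 ^ n - 1)) : ℕ) : ℤ) * 4 ^ t) :
    Int.gcd G ((4:ℤ) ^ (2 ^ n - 1) + 1) = ((4:ℤ) ^ (2 ^ n - 1) + 1) / 5 := by
  set N := 2 ^ n - 1
  change G = ∑ t ∈ range (2 * N), (crtDigit N s t : ℤ) * 4 ^ t at hG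
  have hN : Odd N :=
    Nat.Even.sub_odd Nat.one_le_two_pow (Nat.even_pow.mpr ⟨even_two, by omega⟩) odd_one
  set Q : ℤ := ∑ t ∈ range N, (-4) ^ t
  have hQ : 5 * Q = 4 ^ N + 1 := by simpa using hN.add_one_mul_geom_sum_neg (4 : ℤ)
  have hQ_nonneg : 0 ≤ Q := by
    have : (0 : ℤ) < 4 ^ N := by positivity
    omega
  have hhalves : ∑ t ∈ range N, ((crtDigit N s t : ℤ) - crtDigit N s (N + t)) * 4 ^ t = -Q := by
    rw [neg_eq_neg_one_mul, mul_sum]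
    refine sum_congr rfl fun t _ => ?_
    rw [hN.crtDigit_sub_crtDigit_add, neg_pow (4 : ℤ)]
    ring
  rw [hG, sum_range_two_mul_mul_pow, hhalves,
    Int.gcd_neg_add_mul_of_dvd hQ_nonneg (Dvd.intro_left 5 hQ)]
  omega

theorem stmt15 (n : ℕ) (hn : 2 ≤ n) (s : ℕ → ℕ)
    (hs01 : ∀ t, s t = 0 ∨ s t = 1)
    (hper : ∀ t, s (t + (2 ^ n - 1)) = s t)
    (hauto : ∀ f, 0 < f → f < 2 ^ n - 1 →
      ∑ l ∈ Finset.range (2 ^ n - 1), (-1 : ℤ) ^ (s (l + f) + s l) = -1)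
    (G : ℤ)
    (hG : G = ∑ t ∈ Finset.range (2 * (2 ^ n - 1)),
      ((t % 2 + 2 * s (t % (2 ^ n - 1)) : ℕ) : ℤ) * 4 ^ t) :
    Int.gcd G ((4:ℤ) ^ (2 ^ n - 1) + 1) = ((4:ℤ) ^ (2 ^ n - 1) + 1) / 5 :=
  stmt15_general n hn s G hG
end

section
/- With g^3 and G as in the Jang et al. construction from a binary ideal-autocorrelation sequence s of period 2^n - 1 with weight 2^{n-1}, gcd(G, 4^{2^n-1} - 1) = 1; consequently gcd(G, 4^{2(2^n-1)} - 1) = (4^{2^n-1}+1)/5 and the 4-adic complexity of g^3 is log_4(5·(4^{2^n-1} - 1)). -/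
/-!
Put `N = 2 ^ n - 1` and `T = ∑_{t<N} (-1)^{s t} 4^t`. Folding the `2N` terms of `G` with
`4^N ≡ ±1` gives `G ≡ -2T (mod 4^N - 1)` and, since the `s`-part cancels,
`G ≡ -(4^N + 1)/5 (mod 4^N + 1)`. Multiplying `T` by its "reverse" `T(4⁻¹)` modulo `4^N - 1`
produces the periodic autocorrelation of `(-1)^s`, so ideal autocorrelation gives
`T · T(4⁻¹) ≡ 2^n - (4^N - 1)/3`. That number is `≡ 1 (mod 3)` and `≡ 2^n` modulo the odd number
`(4^N - 1)/3`, hence prime to `4^N - 1`; so is `G`, and then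
`gcd(G, 4^{2N} - 1) = gcd(G, 4^N + 1) = (4^N + 1)/5`.
-/

open Finset

namespace Int

theorem ModEq.gcd_eq {m a b : ℤ} (h : a ≡ b [ZMOD m]) : a.gcd m = b.gcd m := by
  rw [← gcd_emod, h.eq, gcd_emod]

theorem ModEq.isCoprime_iff {m a b : ℤ} (h : a ≡ b [ZMOD m]) :
    IsCoprime a m ↔ IsCoprime b m := by
  rw [isCoprime_iff_gcd_eq_one, isCoprime_iff_gcd_eq_one, h.gcd_eq]

theorem gcd_mul_left_eq_of_isCoprime {a b c : ℤ} (h : IsCoprime a b) :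
    a.gcd (b * c) = a.gcd c := by
  rw [isCoprime_iff_nat_coprime] at h
  rw [gcd_eq_natAbs, gcd_eq_natAbs, natAbs_mul, h.symm.gcd_mul_left_cancel_right]

end Int

theorem sum_range_two_mul_modEq {m x c : ℤ} {N : ℕ} (hx : x ^ N ≡ c [ZMOD m]) (f : ℕ → ℤ) :
    ∑ t ∈ range (2 * N), f t * x ^ t ≡ ∑ t ∈ range N, (f t + c * f (N + t)) * x ^ t [ZMOD m] := by
  simp only [two_mul, sum_range_add, add_mul, sum_add_distrib]
  refine Int.ModEq.add_left _ (Int.ModEq.sum fun t _ => ?_)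
  calc f (N + t) * x ^ (N + t) = x ^ N * (f (N + t) * x ^ t) := by ring
    _ ≡ c * (f (N + t) * x ^ t) [ZMOD m] := hx.mul_right _
    _ = c * f (N + t) * x ^ t := by ring

theorem sum_range_add_modEq_of_periodic {m : ℤ} {N : ℕ} {h : ℕ → ℤ}
    (hh : ∀ t, h (t + N) ≡ h t [ZMOD m]) (u : ℕ) :
    ∑ f ∈ range N, h (u + f) ≡ ∑ t ∈ range N, h t [ZMOD m] := by
  induction u with
  | zero => simp
  | succ u ih =>
    refine Int.ModEq.add_right_cancel' (h u) (Int.ModEq.trans ?_ (ih.add_right (h u)))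
    calc ∑ f ∈ range N, h (u + 1 + f) + h u = ∑ f ∈ range N, h (u + f) + h (u + N) := by
          rw [← sum_range_succ, sum_range_succ']
          simp only [add_zero, add_assoc, add_comm 1]
      _ ≡ ∑ f ∈ range N, h (u + f) + h u [ZMOD m] := (hh u).add_left _

theorem Function.Periodic.autocorrelation_modEq {N : ℕ} {a : ℕ → ℤ} (ha : Function.Periodic a N)
    (x : ℤ) :
    (∑ t ∈ range N, a t * x ^ t) * ∑ u ∈ range N, a u * x ^ (N - u) ≡
      ∑ f ∈ range N, (∑ u ∈ range N, a (u + f) * a u) * x ^ f [ZMOD x ^ N - 1] := by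
  have hxN : x ^ N ≡ 1 [ZMOD x ^ N - 1] := Int.modEq_sub _ _
  -- `x ^ (N - u)` inverts `x ^ u`, and `x ^ u * ∑ f, a (u + f) * x ^ f` is a cyclic shift
  -- of `∑ t, a t * x ^ t`.
  have hshift : ∀ u ∈ range N, (∑ t ∈ range N, a t * x ^ t) * x ^ (N - u) ≡
      ∑ f ∈ range N, a (u + f) * x ^ f [ZMOD x ^ N - 1] := by
    intro u hu
    have hperiodic : ∀ t, a (t + N) * x ^ (t + N) ≡ a t * x ^ t [ZMOD x ^ N - 1] := by
      intro t
      rw [ha t, pow_add, ← mul_assoc]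
      simpa using hxN.mul_left (a t * x ^ t)
    calc (∑ t ∈ range N, a t * x ^ t) * x ^ (N - u)
        ≡ (∑ f ∈ range N, a (u + f) * x ^ (u + f)) * x ^ (N - u) [ZMOD x ^ N - 1] :=
          ((sum_range_add_modEq_of_periodic hperiodic u).symm).mul_right _
      _ = x ^ N * ∑ f ∈ range N, a (u + f) * x ^ f := by
          rw [← Nat.add_sub_cancel' (mem_range.mp hu).le, mul_sum, sum_mul]
          refine sum_congr rfl fun f _ => ?_
          rw [Nat.add_sub_cancel_left]
          ring
      _ ≡ 1 * ∑ f ∈ range N, a (u + f) * x ^ f [ZMOD x ^ N - 1] := hxN.mul_right _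
      _ = _ := one_mul _
  calc (∑ t ∈ range N, a t * x ^ t) * ∑ u ∈ range N, a u * x ^ (N - u)
      = ∑ u ∈ range N, a u * ((∑ t ∈ range N, a t * x ^ t) * x ^ (N - u)) := by
        rw [mul_sum]; exact sum_congr rfl fun u _ => by ring
    _ ≡ ∑ u ∈ range N, a u * ∑ f ∈ range N, a (u + f) * x ^ f [ZMOD x ^ N - 1] :=
        Int.ModEq.sum fun u hu => (hshift u hu).mul_left _
    _ = _ := by
        simp only [mul_sum, sum_mul]
        rw [sum_comm]
        exact sum_congr rfl fun f _ => sum_congr rfl fun u _ => by ring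

theorem odd_four_pow_sub_one {N : ℕ} (hN : N ≠ 0) : Odd ((4 : ℤ) ^ N - 1) :=
  (Int.even_pow.mpr ⟨by decide, hN⟩).sub_odd odd_one

theorem three_mul_sum_four_pow (N : ℕ) : 3 * ∑ t ∈ range N, (4 : ℤ) ^ t = 4 ^ N - 1 := by
  have := geom_sum_mul (4 : ℤ) N
  linarith

theorem five_mul_sum_neg_four_pow {N : ℕ} (hN : Odd N) :
    5 * ∑ t ∈ range N, (-4 : ℤ) ^ t = 4 ^ N + 1 := by
  have := geom_sum_mul (-4 : ℤ) N
  rw [hN.neg_pow] at this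
  linarith

theorem isCoprime_succ_sub_sum_four_pow {N n : ℕ} (hN : N + 1 = 2 ^ n) (hn : n ≠ 0) :
    IsCoprime ((N + 1 : ℤ) - ∑ t ∈ range N, (4 : ℤ) ^ t) (4 ^ N - 1) := by
  have hN0 : N ≠ 0 := by have := Nat.one_lt_two_pow hn; omega
  set K := ∑ t ∈ range N, (4 : ℤ) ^ t
  rw [← three_mul_sum_four_pow, mul_comm]
  refine IsCoprime.mul_right ?_ ?_
  · have hK : Odd K := (Int.odd_mul.mp (three_mul_sum_four_pow N ▸ odd_four_pow_sub_one hN0)).2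
    have h2n : IsCoprime ((2 : ℤ) ^ n) K := (Int.isCoprime_two_left.mpr hK).pow_left
    rw [← IsCoprime.sub_mul_right_left_iff (z := 1), one_mul] at h2n
    rwa [show (N + 1 : ℤ) = 2 ^ n by exact_mod_cast hN]
  · have hK3 : K ≡ N [ZMOD 3] := by
      simpa using Int.ModEq.sum (s := range N) fun t _ =>
        (show (4 : ℤ) ≡ 1 [ZMOD 3] by decide).pow t
    have : (N + 1 : ℤ) - K ≡ 1 [ZMOD 3] := by
      simpa using (Int.ModEq.refl ((N : ℤ) + 1)).sub hK3
    exact this.isCoprime_iff.mpr isCoprime_one_left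

theorem isCoprime_sum_neg_one_pow_mul_four_pow {N n : ℕ} (hN : N + 1 = 2 ^ n) (hn : n ≠ 0)
    {s : ℕ → ℕ} (hper : Function.Periodic s N)
    (hauto : ∀ f, 0 < f → f < N → ∑ l ∈ range N, (-1 : ℤ) ^ (s (l + f) + s l) = -1) :
    IsCoprime (∑ t ∈ range N, (-1 : ℤ) ^ s t * 4 ^ t) (4 ^ N - 1) := by
  have hN0 : 0 < N := by have := Nat.one_lt_two_pow hn; omega
  have hcorr := Function.Periodic.autocorrelation_modEq (a := fun t => (-1 : ℤ) ^ s t)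
    (hper.comp fun k => (-1 : ℤ) ^ k) 4
  have hcorr_add_one : ∑ f ∈ range N,
      ((∑ u ∈ range N, (-1 : ℤ) ^ s (u + f) * (-1) ^ s u) + 1) * 4 ^ f = N + 1 := by
    rw [sum_eq_single 0]
    · simp [← pow_add, ← two_mul, pow_mul]
    · intro f hf hf0
      simp only [← pow_add, hauto f (Nat.pos_of_ne_zero hf0) (mem_range.mp hf)]
      ring
    · exact fun h => absurd (mem_range.mpr hN0) h
  have hsum : ∑ f ∈ range N, (∑ u ∈ range N, (-1 : ℤ) ^ s (u + f) * (-1) ^ s u) * 4 ^ f =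
      N + 1 - ∑ f ∈ range N, (4 : ℤ) ^ f := by
    simp only [add_mul, one_mul, sum_add_distrib] at hcorr_add_one
    linarith
  rw [hsum] at hcorr
  exact (hcorr.isCoprime_iff.mpr (isCoprime_succ_sub_sum_four_pow hN hn)).of_mul_left_left

theorem sum_jang_modEq_four_pow_sub_one {N : ℕ} (hN : Odd N) {s : ℕ → ℕ}
    (hs01 : ∀ t, s t = 0 ∨ s t = 1) :
    ∑ t ∈ range (2 * N), ((t % 2 + 2 * s (t % N) : ℕ) : ℤ) * 4 ^ t ≡
      -2 * ∑ t ∈ range N, (-1) ^ s t * 4 ^ t [ZMOD 4 ^ N - 1] := by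
  refine (sum_range_two_mul_modEq (Int.modEq_sub _ _) _).trans ?_
  have hterm : ∀ t ∈ range N, (((t % 2 + 2 * s (t % N) : ℕ) : ℤ) +
      1 * ((N + t) % 2 + 2 * s ((N + t) % N) : ℕ)) * 4 ^ t =
      3 * 4 ^ t - 2 * ((-1) ^ s t * 4 ^ t) := by
    intro t ht
    rw [Nat.add_mod_left, Nat.mod_eq_of_lt (mem_range.mp ht)]
    have hcoef : ((t % 2 + 2 * s t : ℕ) : ℤ) + 1 * ((N + t) % 2 + 2 * s t : ℕ) =
        3 - 2 * (-1) ^ s t := by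
      obtain ⟨k, rfl⟩ := hN
      rcases hs01 t with h | h <;> rw [h] <;> push_cast <;> omega
    rw [hcoef]
    ring
  rw [sum_congr rfl hterm, sum_sub_distrib, ← mul_sum, ← mul_sum, three_mul_sum_four_pow]
  exact Int.modEq_iff_dvd.mpr ⟨-1, by ring⟩

theorem sum_jang_modEq_four_pow_add_one {N : ℕ} (hN : Odd N) (s : ℕ → ℕ) :
    ∑ t ∈ range (2 * N), ((t % 2 + 2 * s (t % N) : ℕ) : ℤ) * 4 ^ t ≡
      -∑ t ∈ range N, (-4) ^ t [ZMOD 4 ^ N + 1] := by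
  refine (sum_range_two_mul_modEq (c := -1) (Int.modEq_iff_dvd.mpr ⟨-1, by ring⟩) _).trans ?_
  have hterm : ∀ t ∈ range N, (((t % 2 + 2 * s (t % N) : ℕ) : ℤ) +
      -1 * ((N + t) % 2 + 2 * s ((N + t) % N) : ℕ)) * 4 ^ t = -(-4) ^ t := by
    intro t ht
    rw [Nat.add_mod_left, Nat.mod_eq_of_lt (mem_range.mp ht), neg_pow]
    have hcoef : ((t % 2 + 2 * s t : ℕ) : ℤ) + -1 * ((N + t) % 2 + 2 * s t : ℕ) = -(-1) ^ t := by
      obtain ⟨k, rfl⟩ := hN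
      rcases Nat.even_or_odd t with ht | ht <;> rw [ht.neg_one_pow] <;> push_cast <;> grind
    rw [hcoef]
    ring
  rw [sum_congr rfl hterm, sum_neg_distrib]

theorem stmt16_general (n : ℕ) (hn : 2 ≤ n) (s : ℕ → ℕ)
    (hs01 : ∀ t, s t = 0 ∨ s t = 1)
    (hper : ∀ t, s (t + (2 ^ n - 1)) = s t)
    (hauto : ∀ f, 0 < f → f < 2 ^ n - 1 →
      ∑ l ∈ Finset.range (2 ^ n - 1), (-1 : ℤ) ^ (s (l + f) + s l) = -1)
    (G : ℤ)
    (hG : G = ∑ t ∈ Finset.range (2 * (2 ^ n - 1)),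
      ((t % 2 + 2 * s (t % (2 ^ n - 1)) : ℕ) : ℤ) * 4 ^ t) :
    Int.gcd G ((4:ℤ) ^ (2 ^ n - 1) - 1) = 1 ∧
    (Int.gcd G ((4:ℤ) ^ (2 * (2 ^ n - 1)) - 1) : ℤ) = ((4:ℤ) ^ (2 ^ n - 1) + 1) / 5 ∧
    Real.logb 4 (((4:ℝ) ^ (2 * (2 ^ n - 1)) - 1) /
        (Int.gcd G ((4:ℤ) ^ (2 * (2 ^ n - 1)) - 1) : ℝ)) =
      Real.logb 4 (5 * ((4:ℝ) ^ (2 ^ n - 1) - 1)) := by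
  set N := 2 ^ n - 1
  have hn0 : n ≠ 0 := by omega
  have hN : N + 1 = 2 ^ n := Nat.sub_add_cancel Nat.one_le_two_pow
  have hNodd : Odd N :=
    Nat.Even.sub_odd Nat.one_le_two_pow (Nat.even_pow.mpr ⟨even_two, hn0⟩) odd_one
  set Q := ∑ t ∈ range N, (-4 : ℤ) ^ t
  have h5Q : 5 * Q = 4 ^ N + 1 := five_mul_sum_neg_four_pow hNodd
  have hQ : 0 < Q := by linarith [pow_pos (four_pos : (0 : ℤ) < 4) N]
  have hcopR : IsCoprime G (4 ^ N - 1) := by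
    rw [hG, (sum_jang_modEq_four_pow_sub_one hNodd hs01).isCoprime_iff]
    exact (Int.isCoprime_two_left.mpr (odd_four_pow_sub_one hNodd.pos.ne')).neg_left.mul_left
      (isCoprime_sum_neg_one_pow_mul_four_pow hN hn0 hper hauto)
  have hgcd : (Int.gcd G (4 ^ (2 * N) - 1) : ℤ) = Q := by
    rw [show (4 : ℤ) ^ (2 * N) - 1 = (4 ^ N - 1) * (4 ^ N + 1) by ring,
      Int.gcd_mul_left_eq_of_isCoprime hcopR, hG,
      (sum_jang_modEq_four_pow_add_one hNodd s).gcd_eq, Int.neg_gcd, ← h5Q,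
      Int.gcd_mul_left_right, Int.natAbs_of_nonneg hQ.le]
  refine ⟨Int.isCoprime_iff_gcd_eq_one.mp hcopR, by rw [hgcd, ← h5Q]; omega, congrArg _ ?_⟩
  have hgcdℝ : ((Int.gcd G (4 ^ (2 * N) - 1) : ℕ) : ℝ) = Q := by exact_mod_cast hgcd
  have h5Qℝ : 5 * (Q : ℝ) = 4 ^ N + 1 := by exact_mod_cast h5Q
  rw [hgcdℝ, div_eq_iff (Int.cast_pos.mpr hQ).ne']
  linear_combination (1 - (4 : ℝ) ^ N) * h5Qℝ

theorem stmt16 (n : ℕ) (hn : 2 ≤ n) (s : ℕ → ℕ)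
    (hs01 : ∀ t, s t = 0 ∨ s t = 1)
    (hper : ∀ t, s (t + (2 ^ n - 1)) = s t)
    (hauto : ∀ f, 0 < f → f < 2 ^ n - 1 →
      ∑ l ∈ Finset.range (2 ^ n - 1), (-1 : ℤ) ^ (s (l + f) + s l) = -1)
    (hw : ((Finset.range (2 ^ n - 1)).filter (fun t => s t = 1)).card = 2 ^ (n - 1))
    (G : ℤ)
    (hG : G = ∑ t ∈ Finset.range (2 * (2 ^ n - 1)),
      ((t % 2 + 2 * s (t % (2 ^ n - 1)) : ℕ) : ℤ) * 4 ^ t) :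
    Int.gcd G ((4:ℤ) ^ (2 ^ n - 1) - 1) = 1 ∧
    (Int.gcd G ((4:ℤ) ^ (2 * (2 ^ n - 1)) - 1) : ℤ) = ((4:ℤ) ^ (2 ^ n - 1) + 1) / 5 ∧
    Real.logb 4 (((4:ℝ) ^ (2 * (2 ^ n - 1)) - 1) /
        (Int.gcd G ((4:ℤ) ^ (2 * (2 ^ n - 1)) - 1) : ℝ)) =
      Real.logb 4 (5 * ((4:ℝ) ^ (2 ^ n - 1) - 1)) :=
  stmt16_general n hn s hs01 hper hauto G hG
end
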